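/- arXiv:1408.4301 — 2 statements merged into one kernel-verified Lean document; each statement's English description precedes it below -/
import Mathlib

section
/- (Nonarchimedean Poincaré lemma) Let $K$ be a nonarchimedean field of characteristic $0$, $W$ a $K$-Banach space, $\epsilon' < \epsilon$ multiradii in $\mathbf{R}_+^n$, and $q > 0$. Let $\Omega^q_\epsilon(W) := \bigwedge^q_K (K^n)^\vee \otimes_K F_\epsilon(W)$ be the Banach space of $\epsilon$-convergent $W$-valued $q$-forms, with exterior differential $d$. Then there exists a bounded linear map $h : \Omega^q_\epsilon(W) \to \Omega^{q-1}_{\epsilon'}(W)$ such that $d \circ h + h \circ d = i$, where $i: \Omega^q_\epsilon(W) \to \Omega^q_{\epsilon'}(W)$ is the natural inclusion. In particular, every closed $\epsilon$-convergent $q$-form ($q>0$) becomes exact after restriction to the smaller polydisc of radius $\epsilon'$. -/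
open Filter

/-- The decay condition `‖a_I‖ ε^I → 0` defining `F_ε(W)`. -/
def MDecays {n : ℕ} {W : Type*} [NormedAddCommGroup W] (ε : Fin n → ℝ)
    (a : (Fin n → ℕ) → W) : Prop :=
  Tendsto (fun I : Fin n → ℕ => ‖a I‖ * ∏ i, ε i ^ I i) cofinite (nhds 0)

/-- The norm `sup_I ‖a_I‖ ε^I` on `F_ε(W)`. -/
noncomputable def mNorm {n : ℕ} {W : Type*} [NormedAddCommGroup W] (ε : Fin n → ℝ)
    (a : (Fin n → ℕ) → W) : ℝ :=
  ⨆ I : Fin n → ℕ, ‖a I‖ * ∏ i, ε i ^ I i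

/-- A `W`-valued form in `n` variables is encoded as `ω : (Fin n → ℕ) → Finset (Fin n) → W`,
`ω I S` being the coefficient of `x^I dx_{k_1} ∧ ⋯ ∧ dx_{k_q}` for `S = {k_1 < ⋯ < k_q}`.
`IsConvForm ε q ω` says `ω` belongs to `Ω^q_ε(W)`: it is concentrated in degree `q`
and each component is an `ε`-convergent power series. -/
def IsConvForm {n : ℕ} {W : Type*} [NormedAddCommGroup W] (ε : Fin n → ℝ) (q : ℕ)
    (ω : (Fin n → ℕ) → Finset (Fin n) → W) : Prop :=
  (∀ I S, S.card ≠ q → ω I S = 0) ∧ ∀ S : Finset (Fin n), MDecays ε (fun I => ω I S)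

/-- The norm on `Ω^q_ε(W)` induced componentwise from `F_ε(W)`. -/
noncomputable def formNorm {n : ℕ} {W : Type*} [NormedAddCommGroup W] (ε : Fin n → ℝ)
    (ω : (Fin n → ℕ) → Finset (Fin n) → W) : ℝ :=
  ⨆ S : Finset (Fin n), mNorm ε (fun I => ω I S)

/-- The exterior derivative `d` on `W`-valued forms, in coefficients. -/
noncomputable def dW (K : Type*) [NontriviallyNormedField K] {W : Type*}
    [NormedAddCommGroup W] [NormedSpace K W] {n : ℕ}
    (ω : (Fin n → ℕ) → Finset (Fin n) → W) : (Fin n → ℕ) → Finset (Fin n) → W :=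
  fun I S => ∑ β ∈ S,
    ((-1 : K) ^ (((S.erase β).filter (fun t => t < β)).card) * ((I β + 1 : ℕ) : K)) •
      ω (Function.update I β (I β + 1)) (S.erase β)


namespace NPL

open Finset Function

variable {K : Type*} [NontriviallyNormedField K]
variable {W : Type*} [NormedAddCommGroup W] [NormedSpace K W]
variable {n : ℕ}

/-- The sign `(-1)^{#{t ∈ S | t < β}}`. -/
def sgn (K : Type*) [NontriviallyNormedField K] {n : ℕ} (S : Finset (Fin n)) (β : Fin n) : K :=
  (-1) ^ ((S.filter (fun t => t < β)).card)

lemma filter_lt_erase (S : Finset (Fin n)) (β : Fin n) :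
    (S.erase β).filter (fun t => t < β) = S.filter (fun t => t < β) := by
  rw [Finset.filter_erase]
  exact Finset.erase_eq_of_notMem (by simp)

lemma sgn_erase (S : Finset (Fin n)) (β : Fin n) : sgn K (S.erase β) β = sgn K S β := by
  rw [sgn, sgn, filter_lt_erase]

lemma sgn_insert_self (S : Finset (Fin n)) (γ : Fin n) : sgn K (insert γ S) γ = sgn K S γ := by
  rw [sgn, sgn, Finset.filter_insert, if_neg (lt_irrefl γ)]

lemma sgn_mul_self (S : Finset (Fin n)) (β : Fin n) : sgn K S β * sgn K S β = 1 := by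
  rw [sgn, ← mul_pow]; simp

lemma norm_sgn (S : Finset (Fin n)) (β : Fin n) : ‖sgn K S β‖ = 1 := by
  rw [sgn, norm_pow, norm_neg, norm_one, one_pow]

lemma dW_eq (ω : (Fin n → ℕ) → Finset (Fin n) → W) (I : Fin n → ℕ) (S : Finset (Fin n)) :
    dW K ω I S = ∑ β ∈ S, (sgn K S β * ((I β + 1 : ℕ) : K)) •
      ω (Function.update I β (I β + 1)) (S.erase β) := by
  unfold dW
  refine Finset.sum_congr rfl fun β hβ => ?_
  rw [show sgn K S β = (-1 : K) ^ (((S.erase β).filter (fun t => t < β)).card) by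
    rw [sgn, filter_lt_erase]]

/-- The homotopy operator in coefficients. -/
noncomputable def hW (K : Type*) [NontriviallyNormedField K] {W : Type*} [NormedAddCommGroup W]
    [NormedSpace K W] {n : ℕ} (ω : (Fin n → ℕ) → Finset (Fin n) → W) :
    (Fin n → ℕ) → Finset (Fin n) → W :=
  fun J T => (((∑ i, J i) + T.card : ℕ) : K)⁻¹ •
    ∑ γ ∈ (Finset.univ \ T).filter (fun γ => J γ ≠ 0),
      sgn K T γ • ω (Function.update J γ (J γ - 1)) (insert γ T)

lemma sgn_cross {S : Finset (Fin n)} {β γ : Fin n} (hβ : β ∈ S) (hγ : γ ∉ S) :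
    sgn K S β * sgn K (S.erase β) γ + sgn K S γ * sgn K (insert γ S) β = 0 := by
  have hne : β ≠ γ := fun h => hγ (h ▸ hβ)
  rcases hne.lt_or_gt with h | h
  · have h1 : (S.filter (fun t => t < γ)).card
        = ((S.erase β).filter (fun t => t < γ)).card + 1 := by
      have hm : β ∈ S.filter (fun t => t < γ) := Finset.mem_filter.mpr ⟨hβ, h⟩
      rw [Finset.filter_erase]
      exact (Finset.card_erase_add_one hm).symm
    have h2 : (insert γ S).filter (fun t => t < β) = S.filter (fun t => t < β) := by
      rw [Finset.filter_insert, if_neg (not_lt_of_gt h)]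
    rw [sgn, sgn, sgn, sgn, h1, h2, pow_succ]
    ring
  · have h1 : (S.erase β).filter (fun t => t < γ) = S.filter (fun t => t < γ) := by
      rw [Finset.filter_erase]
      exact Finset.erase_eq_of_notMem (fun hh => absurd (Finset.mem_filter.mp hh).2 (not_lt_of_gt h))
    have h2 : ((insert γ S).filter (fun t => t < β)).card
        = (S.filter (fun t => t < β)).card + 1 := by
      rw [Finset.filter_insert, if_pos h,
        Finset.card_insert_of_notMem (fun hh => hγ (Finset.mem_filter.mp hh).1)]
    rw [sgn, sgn, sgn, sgn, h1, h2, pow_succ]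
    ring

end NPL

namespace NPL

variable {K : Type*} [NontriviallyNormedField K]
variable {W : Type*} [NormedAddCommGroup W] [NormedSpace K W]
variable {n : ℕ}

open Finset Function

lemma homotopy [CharZero K] (ω : (Fin n → ℕ) → Finset (Fin n) → W)
    (J : Fin n → ℕ) (S : Finset (Fin n)) (hne : (∑ i, J i) + S.card ≠ 0) :
    dW K (hW K ω) J S + hW K (dW K ω) J S = ω J S := by
  set N : ℕ := (∑ i, J i) + S.card with hN
  have hNK : ((N : ℕ) : K) ≠ 0 := Nat.cast_ne_zero.mpr hne
  set B : Finset (Fin n) := (Finset.univ \ S).filter (fun γ => J γ ≠ 0) with hB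
  have hBS : ∀ γ ∈ B, γ ∉ S ∧ J γ ≠ 0 := by
    intro γ hγ
    simp only [hB, Finset.mem_filter, Finset.mem_sdiff, Finset.mem_univ, true_and] at hγ
    exact hγ
  have e1 : dW K (hW K ω) J S
      = ((N : ℕ) : K)⁻¹ • ((∑ β ∈ S, ((J β + 1 : ℕ) : K) • ω J S)
        + ∑ β ∈ S, ∑ γ ∈ B,
          (sgn K S β * ((J β + 1 : ℕ) : K) * sgn K (S.erase β) γ) •
            ω (Function.update (Function.update J β (J β + 1)) γ (J γ - 1))
              (insert γ (S.erase β))) := by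
    rw [dW_eq]
    have key : ∀ β ∈ S, hW K ω (Function.update J β (J β + 1)) (S.erase β)
        = ((N : ℕ) : K)⁻¹ • (sgn K (S.erase β) β • ω J S
            + ∑ γ ∈ B, sgn K (S.erase β) γ •
                ω (Function.update (Function.update J β (J β + 1)) γ (J γ - 1))
                  (insert γ (S.erase β))) := by
      intro β hβ
      rw [hW]
      have hsum : (∑ i, Function.update J β (J β + 1) i) + (S.erase β).card = N := by
        have h1 : ∑ i, Function.update J β (J β + 1) i
            = (J β + 1) + ∑ i ∈ Finset.univ \ {β}, J i :=
          Finset.sum_update_of_mem (Finset.mem_univ β) J (J β + 1)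
        have h2 : J β + ∑ i ∈ Finset.univ \ {β}, J i = ∑ i, J i := by
          rw [Finset.sdiff_singleton_eq_erase]
          exact Finset.add_sum_erase _ _ (Finset.mem_univ β)
        have h3 : (S.erase β).card + 1 = S.card := Finset.card_erase_add_one hβ
        omega
      rw [hsum]
      have hset : ((Finset.univ \ S.erase β).filter
          (fun γ => Function.update J β (J β + 1) γ ≠ 0)) = insert β B := by
        ext γ
        by_cases hgb : γ = β
        · subst hgb
          simp [hβ]
        · simp only [Finset.mem_filter, Finset.mem_sdiff, Finset.mem_univ, true_and,
            Finset.mem_erase, Finset.mem_insert, hgb, Function.update_of_ne hgb, hB,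
            false_or, not_and]
          tauto
      rw [hset, Finset.sum_insert (fun hmem => (hBS β hmem).1 hβ)]
      congr 2
      · rw [Function.update_self, Function.update_idem, Nat.add_sub_cancel,
          Function.update_eq_self, Finset.insert_erase hβ]
      · refine Finset.sum_congr rfl fun γ hγ => ?_
        have hne' : γ ≠ β := fun h => (hBS γ hγ).1 (h ▸ hβ)
        rw [Function.update_of_ne hne']
    calc (∑ β ∈ S, (sgn K S β * ((J β + 1 : ℕ) : K)) •
          hW K ω (Function.update J β (J β + 1)) (S.erase β))
        = ∑ β ∈ S, ((N : ℕ) : K)⁻¹ • (((J β + 1 : ℕ) : K) • ω J S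
            + ∑ γ ∈ B, (sgn K S β * ((J β + 1 : ℕ) : K) * sgn K (S.erase β) γ) •
              ω (Function.update (Function.update J β (J β + 1)) γ (J γ - 1))
                (insert γ (S.erase β))) := by
          refine Finset.sum_congr rfl fun β hβ => ?_
          have hsc : sgn K S β * ((J β + 1 : ℕ) : K) * sgn K S β = ((J β + 1 : ℕ) : K) := by
            rw [mul_comm (sgn K S β) ((J β + 1 : ℕ) : K), mul_assoc, sgn_mul_self, mul_one]
          rw [key β hβ, smul_comm (sgn K S β * ((J β + 1 : ℕ) : K)) (((N : ℕ) : K)⁻¹),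
            smul_add, smul_smul, sgn_erase, hsc, Finset.smul_sum]
          congr 2
          exact Finset.sum_congr rfl fun γ _ => smul_smul _ _ _
      _ = _ := by
          rw [← Finset.smul_sum, Finset.sum_add_distrib]
  have e2 : hW K (dW K ω) J S
      = ((N : ℕ) : K)⁻¹ • ((∑ γ ∈ B, ((J γ : ℕ) : K) • ω J S)
        + ∑ γ ∈ B, ∑ β ∈ S,
          (sgn K S γ * (sgn K (insert γ S) β * ((J β + 1 : ℕ) : K))) •
            ω (Function.update (Function.update J γ (J γ - 1)) β (J β + 1))
              ((insert γ S).erase β)) := by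
    rw [hW, ← hN, ← hB]
    have key2 : ∀ γ ∈ B, dW K ω (Function.update J γ (J γ - 1)) (insert γ S)
        = (sgn K S γ * ((J γ : ℕ) : K)) • ω J S
          + ∑ β ∈ S, (sgn K (insert γ S) β * ((J β + 1 : ℕ) : K)) •
              ω (Function.update (Function.update J γ (J γ - 1)) β (J β + 1))
                ((insert γ S).erase β) := by
      intro γ hγ
      obtain ⟨hγS, hJγ⟩ := hBS γ hγ
      rw [dW_eq, Finset.sum_insert hγS]
      congr 1
      · have e_val : Function.update J γ (J γ - 1) γ = J γ - 1 := Function.update_self _ _ _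
        have hfix : J γ - 1 + 1 = J γ := Nat.succ_pred_eq_of_ne_zero hJγ
        have e_arg : Function.update (Function.update J γ (J γ - 1)) γ
            (Function.update J γ (J γ - 1) γ + 1) = J := by
          rw [e_val, Function.update_idem, hfix, Function.update_eq_self]
        rw [e_arg, Finset.erase_insert hγS, sgn_insert_self, e_val, hfix]
      · refine Finset.sum_congr rfl fun β hβ => ?_
        have hne' : β ≠ γ := fun h => hγS (h ▸ hβ)
        rw [Function.update_of_ne hne']
    congr 1
    calc (∑ γ ∈ B, sgn K S γ •
          dW K ω (Function.update J γ (J γ - 1)) (insert γ S))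
        = ∑ γ ∈ B, (((J γ : ℕ) : K) • ω J S
            + ∑ β ∈ S, (sgn K S γ * (sgn K (insert γ S) β * ((J β + 1 : ℕ) : K))) •
              ω (Function.update (Function.update J γ (J γ - 1)) β (J β + 1))
                ((insert γ S).erase β)) := by
          refine Finset.sum_congr rfl fun γ hγ => ?_
          rw [key2 γ hγ, smul_add]
          congr 1
          · rw [smul_smul, ← mul_assoc, sgn_mul_self, one_mul]
          · rw [Finset.smul_sum]
            refine Finset.sum_congr rfl fun β hβ => ?_
            rw [smul_smul]
      _ = _ := by rw [Finset.sum_add_distrib]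
  rw [e1, e2, ← smul_add]
  have hXY : ((∑ β ∈ S, ((J β + 1 : ℕ) : K) • ω J S)
        + ∑ β ∈ S, ∑ γ ∈ B,
          (sgn K S β * ((J β + 1 : ℕ) : K) * sgn K (S.erase β) γ) •
            ω (Function.update (Function.update J β (J β + 1)) γ (J γ - 1))
              (insert γ (S.erase β)))
      + ((∑ γ ∈ B, ((J γ : ℕ) : K) • ω J S)
        + ∑ γ ∈ B, ∑ β ∈ S,
          (sgn K S γ * (sgn K (insert γ S) β * ((J β + 1 : ℕ) : K))) •
            ω (Function.update (Function.update J γ (J γ - 1)) β (J β + 1))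
              ((insert γ S).erase β))
      = ((N : ℕ) : K) • ω J S := by
    have hcomm : (∑ γ ∈ B, ∑ β ∈ S,
        (sgn K S γ * (sgn K (insert γ S) β * ((J β + 1 : ℕ) : K))) •
          ω (Function.update (Function.update J γ (J γ - 1)) β (J β + 1))
            ((insert γ S).erase β))
        = ∑ β ∈ S, ∑ γ ∈ B,
          (sgn K S γ * (sgn K (insert γ S) β * ((J β + 1 : ℕ) : K))) •
            ω (Function.update (Function.update J γ (J γ - 1)) β (J β + 1))
              ((insert γ S).erase β) := Finset.sum_comm
    rw [hcomm]
    have hcancel : ∀ β ∈ S, ∀ γ ∈ B,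
        (sgn K S β * ((J β + 1 : ℕ) : K) * sgn K (S.erase β) γ) •
            ω (Function.update (Function.update J β (J β + 1)) γ (J γ - 1))
              (insert γ (S.erase β))
          + (sgn K S γ * (sgn K (insert γ S) β * ((J β + 1 : ℕ) : K))) •
            ω (Function.update (Function.update J γ (J γ - 1)) β (J β + 1))
              ((insert γ S).erase β) = 0 := by
      intro β hβ γ hγ
      obtain ⟨hγS, _⟩ := hBS γ hγ
      have hne' : γ ≠ β := fun h => hγS (h ▸ hβ)
      have harg : Function.update (Function.update J β (J β + 1)) γ (J γ - 1)
          = Function.update (Function.update J γ (J γ - 1)) β (J β + 1) :=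
        Function.update_comm hne'.symm _ _ _
      have hset : insert γ (S.erase β) = (insert γ S).erase β :=
        (Finset.erase_insert_of_ne hne').symm
      rw [harg, hset, ← add_smul]
      have hs : sgn K S β * ((J β + 1 : ℕ) : K) * sgn K (S.erase β) γ
          + sgn K S γ * (sgn K (insert γ S) β * ((J β + 1 : ℕ) : K))
          = (sgn K S β * sgn K (S.erase β) γ
              + sgn K S γ * sgn K (insert γ S) β) * ((J β + 1 : ℕ) : K) := by ring
      rw [hs, sgn_cross hβ hγS, zero_mul, zero_smul]
    have hzero : (∑ β ∈ S, ∑ γ ∈ B,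
          (sgn K S β * ((J β + 1 : ℕ) : K) * sgn K (S.erase β) γ) •
            ω (Function.update (Function.update J β (J β + 1)) γ (J γ - 1))
              (insert γ (S.erase β)))
        + ∑ β ∈ S, ∑ γ ∈ B,
          (sgn K S γ * (sgn K (insert γ S) β * ((J β + 1 : ℕ) : K))) •
            ω (Function.update (Function.update J γ (J γ - 1)) β (J β + 1))
              ((insert γ S).erase β) = 0 := by
      rw [← Finset.sum_add_distrib]
      refine Finset.sum_eq_zero fun β hβ => ?_
      rw [← Finset.sum_add_distrib]
      exact Finset.sum_eq_zero fun γ hγ => hcancel β hβ γ hγ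
    have hdiag : (∑ β ∈ S, ((J β + 1 : ℕ) : K) • ω J S)
        + ∑ γ ∈ B, ((J γ : ℕ) : K) • ω J S = ((N : ℕ) : K) • ω J S := by
      rw [← Finset.sum_smul, ← Finset.sum_smul, ← add_smul]
      congr 1
      rw [← Nat.cast_sum, ← Nat.cast_sum, ← Nat.cast_add, Nat.cast_inj]
      have h1 : ∑ β ∈ S, (J β + 1) = (∑ β ∈ S, J β) + S.card := by
        rw [Finset.sum_add_distrib, Finset.sum_const, smul_eq_mul, mul_one]
      have h2 : ∑ γ ∈ B, J γ = ∑ γ ∈ Finset.univ \ S, J γ := by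
        rw [hB]; exact Finset.sum_filter_ne_zero _
      have h3 : (∑ γ ∈ Finset.univ \ S, J γ) + ∑ β ∈ S, J β = ∑ i, J i :=
        Finset.sum_sdiff (Finset.subset_univ S)
      omega
    calc _ = ((∑ β ∈ S, ((J β + 1 : ℕ) : K) • ω J S)
          + ∑ γ ∈ B, ((J γ : ℕ) : K) • ω J S)
          + ((∑ β ∈ S, ∑ γ ∈ B,
            (sgn K S β * ((J β + 1 : ℕ) : K) * sgn K (S.erase β) γ) •
              ω (Function.update (Function.update J β (J β + 1)) γ (J γ - 1))
                (insert γ (S.erase β)))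
          + ∑ β ∈ S, ∑ γ ∈ B,
            (sgn K S γ * (sgn K (insert γ S) β * ((J β + 1 : ℕ) : K))) •
              ω (Function.update (Function.update J γ (J γ - 1)) β (J β + 1))
                ((insert γ S).erase β)) := by abel
      _ = ((N : ℕ) : K) • ω J S := by rw [hzero, hdiag, add_zero]
  rw [hXY, inv_smul_smul₀ hNK]

end NPL

namespace NPL

open Finset Function

variable {K : Type*} [NontriviallyNormedField K]
variable {n : ℕ}

lemma bddAbove_range_of_tendsto_cofinite {α : Type*} {f : α → ℝ}
    (h : Tendsto f cofinite (nhds 0)) : BddAbove (Set.range f) := by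
  have h1 : {x | ¬ f x < 1}.Finite := by
    have h2 := h (Iio_mem_nhds (show (0:ℝ) < 1 by norm_num))
    rw [Filter.mem_map, Filter.mem_cofinite] at h2
    exact h2
  have hsub : Set.range f ⊆ (f '' {x | ¬ f x < 1}) ∪ Set.Iio 1 := by
    rintro y ⟨x, rfl⟩
    by_cases hx : f x < 1
    · exact Or.inr hx
    · exact Or.inl ⟨x, hx, rfl⟩
  exact BddAbove.mono hsub (BddAbove.union ((h1.image f).bddAbove) bddAbove_Iio)

lemma exists_pow_mul_norm_natCast (K : Type*) [NontriviallyNormedField K]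
    [IsUltrametricDist K] [CharZero K] :
    ∃ k : ℕ, ∀ m : ℕ, m ≠ 0 → 1 ≤ (m : ℝ) ^ k * ‖(m : K)‖ := by
  by_cases hall : ∀ p : ℕ, p.Prime → ‖(p : K)‖ = 1
  · refine ⟨0, fun m hm => ?_⟩
    have hone : ∀ m : ℕ, m ≠ 0 → ‖(m : K)‖ = 1 := by
      intro m
      induction m using Nat.strong_induction_on with
      | _ m ih =>
        intro hm
        rcases eq_or_ne m 1 with rfl | h1
        · simp
        · have hp := Nat.minFac_prime h1
          have hdvd : m.minFac ∣ m := Nat.minFac_dvd m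
          have heq : m = m.minFac * (m / m.minFac) := (Nat.mul_div_cancel' hdvd).symm
          have hltm : m / m.minFac < m := Nat.div_lt_self (Nat.pos_of_ne_zero hm) hp.one_lt
          have hne2 : m / m.minFac ≠ 0 := by
            intro h0
            rw [heq, h0, mul_zero] at hm
            exact hm rfl
          calc ‖(m : K)‖ = ‖((m.minFac * (m / m.minFac) : ℕ) : K)‖ := by rw [← heq]
            _ = ‖((m.minFac : ℕ) : K)‖ * ‖((m / m.minFac : ℕ) : K)‖ := by
                rw [Nat.cast_mul, norm_mul]
            _ = 1 := by rw [hall _ hp, ih _ hltm hne2, mul_one]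
    rw [hone m hm, pow_zero, one_mul]
  · push_neg at hall
    obtain ⟨p, hp, hnorm⟩ := hall
    have hle1 : ‖(p : K)‖ ≤ 1 := IsUltrametricDist.norm_natCast_le_one K p
    have hlt1 : ‖(p : K)‖ < 1 := lt_of_le_of_ne hle1 hnorm
    have hppos : 0 < ‖(p : K)‖ := by
      rw [norm_pos_iff]
      exact_mod_cast Nat.cast_ne_zero.mpr hp.ne_zero
    have hcop : ∀ u : ℕ, u ≠ 0 → ¬ (p ∣ u) → ‖(u : K)‖ = 1 := by
      intro u hu hpu
      refine le_antisymm (IsUltrametricDist.norm_natCast_le_one K u) ?_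
      by_contra hlt2
      push_neg at hlt2
      have hg : Nat.gcd u p = 1 := Nat.coprime_comm.mp (hp.coprime_iff_not_dvd.mpr hpu)
      have hbez := Nat.gcd_eq_gcd_ab u p
      have h1K : (1 : K) = (u : K) * ((Nat.gcdA u p : ℤ) : K)
          + (p : K) * ((Nat.gcdB u p : ℤ) : K) := by
        have h2 : ((1 : ℕ) : ℤ) = (u : ℤ) * Nat.gcdA u p + (p : ℤ) * Nat.gcdB u p := by
          rw [← hg]; exact hbez
        have h3 := congrArg (fun z : ℤ => ((z : ℤ) : K)) h2
        push_cast at h3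
        simpa using h3
      have hb : (1 : ℝ) ≤ max (‖(u : K) * ((Nat.gcdA u p : ℤ) : K)‖)
          (‖(p : K) * ((Nat.gcdB u p : ℤ) : K)‖) := by
        have := IsUltrametricDist.norm_add_le_max
          ((u : K) * ((Nat.gcdA u p : ℤ) : K)) ((p : K) * ((Nat.gcdB u p : ℤ) : K))
        rw [← h1K, norm_one] at this
        exact this
      have hu1 : ‖(u : K) * ((Nat.gcdA u p : ℤ) : K)‖ < 1 := by
        rw [norm_mul]
        calc ‖(u:K)‖ * ‖((Nat.gcdA u p : ℤ) : K)‖ ≤ ‖(u:K)‖ * 1 :=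
              mul_le_mul_of_nonneg_left (IsUltrametricDist.norm_intCast_le_one K _)
                (norm_nonneg _)
          _ = ‖(u:K)‖ := mul_one _
          _ < 1 := hlt2
      have hp1 : ‖(p : K) * ((Nat.gcdB u p : ℤ) : K)‖ < 1 := by
        rw [norm_mul]
        calc ‖(p:K)‖ * ‖((Nat.gcdB u p : ℤ) : K)‖ ≤ ‖(p:K)‖ * 1 :=
              mul_le_mul_of_nonneg_left (IsUltrametricDist.norm_intCast_le_one K _)
                (norm_nonneg _)
          _ = ‖(p:K)‖ := mul_one _
          _ < 1 := hlt1
      have := max_lt hu1 hp1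
      linarith
    have main : ∀ m : ℕ, m ≠ 0 → ∃ v : ℕ, p ^ v ≤ m ∧ ‖(m : K)‖ = ‖(p : K)‖ ^ v := by
      intro m
      induction m using Nat.strong_induction_on with
      | _ m ih =>
        intro hm
        by_cases hdvd : p ∣ m
        · obtain ⟨m', rfl⟩ := hdvd
          have hm' : m' ≠ 0 := by
            rintro rfl
            simp at hm
          have hltm : m' < p * m' := by
            have h1 := hp.one_lt
            have h2 := Nat.pos_of_ne_zero hm'
            calc m' = 1 * m' := (one_mul m').symm
              _ < p * m' := by exact Nat.mul_lt_mul_of_lt_of_le h1 le_rfl h2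
          obtain ⟨v, hv1, hv2⟩ := ih m' hltm hm'
          refine ⟨v + 1, ?_, ?_⟩
          · rw [pow_succ']
            exact Nat.mul_le_mul_left p hv1
          · rw [Nat.cast_mul, norm_mul, hv2, pow_succ']
        · exact ⟨0, by simpa using Nat.one_le_iff_ne_zero.mpr hm,
            by rw [hcop m hm hdvd, pow_zero]⟩
    obtain ⟨k, hk⟩ := exists_pow_lt_of_lt_one hppos (by norm_num : (1:ℝ)/2 < 1)
    refine ⟨k, fun m hm => ?_⟩
    obtain ⟨v, hv1, hv2⟩ := main m hm
    have h2p : (2 : ℝ) ≤ (p : ℝ) := by exact_mod_cast hp.two_le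
    have hpv : ((p : ℝ) ^ v) ≤ (m : ℝ) := by exact_mod_cast hv1
    have step1 : ((1:ℝ)/2) ^ (k * v) ≤ ‖(p : K)‖ ^ v := by
      rw [pow_mul]
      exact pow_le_pow_left₀ (by positivity) hk.le v
    have step2 : ((p:ℝ) ^ v) ^ k ≤ (m : ℝ) ^ k := pow_le_pow_left₀ (by positivity) hpv k
    have hone : ((2:ℝ)^v)^k * ((1:ℝ)/2)^(k*v) = 1 := by
      rw [← pow_mul, mul_comm k v, div_pow, one_pow, mul_one_div, div_self (by positivity)]
    have step3 : (1 : ℝ) ≤ ((p:ℝ) ^ v) ^ k * ((1:ℝ)/2) ^ (k*v) := by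
      calc (1:ℝ) = ((2:ℝ)^v)^k * ((1:ℝ)/2)^(k*v) := hone.symm
        _ ≤ ((p:ℝ)^v)^k * ((1:ℝ)/2)^(k*v) :=
            mul_le_mul_of_nonneg_right
              (pow_le_pow_left₀ (by positivity) (pow_le_pow_left₀ (by norm_num) h2p v) k)
              (by positivity)
    calc (1:ℝ) ≤ ((p:ℝ)^v)^k * ((1:ℝ)/2)^(k*v) := step3
      _ ≤ (m:ℝ)^k * ‖(p:K)‖^v := by
          apply mul_le_mul step2 step1 (by positivity) (by positivity)
      _ = (m:ℝ)^k * ‖(m:K)‖ := by rw [hv2]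

lemma geom_bound (K : Type*) [NontriviallyNormedField K] [IsUltrametricDist K] [CharZero K]
    {ρ : ℝ} (hρ0 : 0 ≤ ρ) (hρ1 : ρ < 1) :
    ∃ C : ℝ, 0 < C ∧ ∀ m : ℕ, m ≠ 0 → ρ ^ m ≤ C * ‖(m : K)‖ := by
  obtain ⟨k, hk⟩ := exists_pow_mul_norm_natCast K
  have htend : Tendsto (fun m : ℕ => (m : ℝ) ^ k * ρ ^ m) atTop (nhds 0) :=
    tendsto_pow_const_mul_const_pow_of_lt_one k hρ0 hρ1
  obtain ⟨C, hC⟩ := bddAbove_range_of_tendsto_cofinite (by rwa [Nat.cofinite_eq_atTop])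
  refine ⟨max C 1, lt_max_of_lt_right one_pos, fun m hm => ?_⟩
  have h1 : (m:ℝ)^k * ρ^m ≤ C := hC (Set.mem_range_self m)
  have h2 := hk m hm
  have hnn : 0 ≤ ‖(m : K)‖ := norm_nonneg _
  calc ρ ^ m = ρ ^ m * 1 := (mul_one _).symm
    _ ≤ ρ ^ m * ((m:ℝ)^k * ‖(m:K)‖) := mul_le_mul_of_nonneg_left h2 (by positivity)
    _ = ((m:ℝ)^k * ρ^m) * ‖(m:K)‖ := by ring
    _ ≤ C * ‖(m:K)‖ := mul_le_mul_of_nonneg_right h1 hnn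
    _ ≤ max C 1 * ‖(m:K)‖ := mul_le_mul_of_nonneg_right (le_max_left _ _) hnn

lemma tendsto_sigma : Tendsto (fun J : Fin n → ℕ => ∑ i, J i) cofinite atTop := by
  rw [Filter.tendsto_atTop]
  intro b
  rw [Filter.eventually_cofinite]
  have hsub : {J : Fin n → ℕ | ¬ b ≤ ∑ i, J i}
      ⊆ Set.pi Set.univ (fun _ : Fin n => Set.Iic b) := by
    intro J hJ i _
    simp only [Set.mem_setOf_eq, not_le] at hJ
    have h1 : J i ≤ ∑ j, J j :=
      Finset.single_le_sum (fun j _ => Nat.zero_le _) (Finset.mem_univ i)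
    exact le_of_lt (lt_of_le_of_lt h1 hJ)
  exact Set.Finite.subset (Set.Finite.pi fun _ => Set.finite_Iic b) hsub

lemma prod_pow_update (ε : Fin n → ℝ) (J : Fin n → ℕ) (γ : Fin n) (v : ℕ) :
    ∏ i, ε i ^ (Function.update J γ v i)
      = ε γ ^ v * ∏ i ∈ Finset.univ.erase γ, ε i ^ J i := by
  rw [← Finset.mul_prod_erase Finset.univ _ (Finset.mem_univ γ), Function.update_self]
  congr 1
  exact Finset.prod_congr rfl fun i hi => by
    rw [Function.update_of_ne (Finset.mem_erase.mp hi).1]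

lemma prod_pow_down (ε : Fin n → ℝ) (J : Fin n → ℕ) (γ : Fin n) (h : J γ ≠ 0) :
    ε γ * ∏ i, ε i ^ (Function.update J γ (J γ - 1) i) = ∏ i, ε i ^ J i := by
  have hfix : J γ - 1 + 1 = J γ := Nat.succ_pred_eq_of_ne_zero h
  rw [prod_pow_update, ← mul_assoc, ← pow_succ', hfix,
    Finset.mul_prod_erase Finset.univ (fun i => ε i ^ J i) (Finset.mem_univ γ)]

end NPL

namespace NPL

open Finset Function

variable {K : Type*} [NontriviallyNormedField K]
variable {W : Type*} [NormedAddCommGroup W] [NormedSpace K W]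
variable {n : ℕ}

lemma hW_add (ω₁ ω₂ : (Fin n → ℕ) → Finset (Fin n) → W) :
    hW K (ω₁ + ω₂) = hW K ω₁ + hW K ω₂ := by
  funext J T
  simp only [hW, Pi.add_apply, smul_add, Finset.sum_add_distrib]

lemma hW_smul (c : K) (ω : (Fin n → ℕ) → Finset (Fin n) → W) :
    hW K (c • ω) = c • hW K ω := by
  funext J T
  simp only [hW, Pi.smul_apply]
  rw [Finset.sum_congr rfl (fun γ _ => smul_comm (sgn K T γ) c _), ← Finset.smul_sum,
    smul_comm]

end NPL

/-- nonarchimedean Poincaré lemma: for multiradii `ε' < ε` and `q > 0`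
there is a bounded linear map `h : Ω^q_ε(W) → Ω^{q-1}_{ε'}(W)` with `d ∘ h + h ∘ d = i`,
the natural inclusion `Ω^q_ε(W) → Ω^q_{ε'}(W)`. -/
theorem nonarchimedean_poincare_lemma {K : Type*} [NontriviallyNormedField K]
    [IsUltrametricDist K] [CharZero K] [CompleteSpace K]
    {W : Type*} [NormedAddCommGroup W] [NormedSpace K W] [CompleteSpace W]
    {n : ℕ} (ε ε' : Fin n → ℝ) (hε : ∀ i, 0 < ε i) (hε' : ∀ i, 0 < ε' i)
    (hlt : ∀ i, ε' i < ε i) (q : ℕ) (hq : 0 < q) :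
    ∃ h : ((Fin n → ℕ) → Finset (Fin n) → W) → ((Fin n → ℕ) → Finset (Fin n) → W),
      (∀ ω₁ ω₂, h (ω₁ + ω₂) = h ω₁ + h ω₂) ∧
      (∀ (c : K) ω, h (c • ω) = c • h ω) ∧
      ∃ M : ℝ, 0 ≤ M ∧ ∀ ω, IsConvForm ε q ω →
        IsConvForm ε' (q - 1) (h ω) ∧
        formNorm ε' (h ω) ≤ M * formNorm ε ω ∧
        dW K (h ω) + h (dW K ω) = ω := by
  classical
  obtain ⟨ρ₁, hρ₁0, hρ₁1, hρ₁⟩ : ∃ ρ, 0 < ρ ∧ ρ < 1 ∧ ∀ i, ε' i / ε i ≤ ρ := by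
    rcases isEmpty_or_nonempty (Fin n) with hn | hn
    · exact ⟨1/2, by norm_num, by norm_num, fun i => isEmptyElim i⟩
    · obtain ⟨i₀, hi₀⟩ := Finite.exists_max (fun i => ε' i / ε i)
      refine ⟨max (1/2) (ε' i₀ / ε i₀), lt_max_of_lt_left (by norm_num), ?_, ?_⟩
      · exact max_lt (by norm_num) ((div_lt_one (hε i₀)).mpr (hlt i₀))
      · exact fun i => le_max_of_le_right (hi₀ i)
  set ρ := Real.sqrt ρ₁ with hρdef
  have hρ0 : 0 < ρ := Real.sqrt_pos.mpr hρ₁0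
  have hρρ : ρ * ρ = ρ₁ := Real.mul_self_sqrt hρ₁0.le
  have hρ1 : ρ < 1 := by nlinarith [Real.sqrt_nonneg ρ₁]
  obtain ⟨C, hC0, hC⟩ := NPL.geom_bound K hρ0.le hρ1
  set E : ℝ := 1 + ∑ i, ε i with hE
  have hE0 : 0 < E := by
    have : 0 ≤ ∑ i, ε i := Finset.sum_nonneg fun i _ => (hε i).le
    rw [hE]; linarith
  have hEγ : ∀ γ, ε γ ≤ E := by
    intro γ
    have h1 : ε γ ≤ ∑ i, ε i :=
      Finset.single_le_sum (fun i _ => (hε i).le) (Finset.mem_univ γ)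
    rw [hE]; linarith
  set M : ℝ := (n * E * C) * (ρ ^ n)⁻¹ with hM
  have hM0 : 0 ≤ M := by positivity
  refine ⟨NPL.hW K, NPL.hW_add, NPL.hW_smul, M, hM0, fun ω hω => ?_⟩
  have hPe : ∀ J : Fin n → ℕ, 0 < ∏ i, ε i ^ J i :=
    fun J => Finset.prod_pos fun i _ => pow_pos (hε i) _
  have hPe' : ∀ J : Fin n → ℕ, 0 < ∏ i, ε' i ^ J i :=
    fun J => Finset.prod_pos fun i _ => pow_pos (hε' i) _
  have hbddS : ∀ S : Finset (Fin n), ∀ I, ‖ω I S‖ * ∏ i, ε i ^ I i ≤ formNorm ε ω := by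
    intro S I
    have h1 : ‖ω I S‖ * ∏ i, ε i ^ I i ≤ mNorm ε (fun I => ω I S) :=
      le_ciSup (NPL.bddAbove_range_of_tendsto_cofinite (hω.2 S)) I
    have h2 : mNorm ε (fun I => ω I S) ≤ formNorm ε ω :=
      le_ciSup (f := fun S : Finset (Fin n) => mNorm ε (fun I => ω I S))
        (Set.Finite.bddAbove (Set.finite_range _)) S
    linarith
  have hF0 : 0 ≤ formNorm ε ω := by
    apply Real.iSup_nonneg
    intro S
    apply Real.iSup_nonneg
    intro I
    exact mul_nonneg (norm_nonneg _) (hPe I).le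
  -- key pointwise bound
  have key : ∀ (J : Fin n → ℕ) (T : Finset (Fin n)),
      ‖NPL.hW K ω J T‖ * ∏ i, ε' i ^ J i ≤ (M * formNorm ε ω) * ρ ^ (∑ i, J i) := by
    intro J T
    by_cases hm : (∑ i, J i) + T.card = 0
    · have hJ0 : ∀ γ, J γ = 0 := by
        intro γ
        have h1 : ∑ i, J i = 0 := by omega
        exact (Finset.sum_eq_zero_iff.mp h1) γ (Finset.mem_univ γ)
      have hzero : NPL.hW K ω J T = 0 := by
        rw [NPL.hW, Finset.filter_false_of_mem, Finset.sum_empty, smul_zero]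
        intro γ _
        simp [hJ0 γ]
      rw [hzero, norm_zero, zero_mul]
      exact mul_nonneg (mul_nonneg hM0 hF0) (by positivity)
    · set m : ℕ := (∑ i, J i) + T.card with hmdef
      have hmK : ((m : ℕ) : K) ≠ 0 := Nat.cast_ne_zero.mpr hm
      have hmKpos : 0 < ‖((m : ℕ) : K)‖ := norm_pos_iff.mpr hmK
      set F := formNorm ε ω with hFdef
      have hbound0 : 0 ≤ E * F * ρ₁ ^ (∑ i, J i) :=
        mul_nonneg (mul_nonneg hE0.le hF0) (by positivity)
      have hterm : ∀ γ ∈ (Finset.univ \ T).filter (fun γ => J γ ≠ 0),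
          ‖NPL.sgn K T γ • ω (Function.update J γ (J γ - 1)) (insert γ T)‖
              * ∏ i, ε' i ^ J i
            ≤ E * F * ρ₁ ^ (∑ i, J i) := by
        intro γ hγ
        have hJγ : J γ ≠ 0 := (Finset.mem_filter.mp hγ).2
        rw [norm_smul, NPL.norm_sgn, one_mul]
        set I := Function.update J γ (J γ - 1) with hI
        have hprod : ε γ * ∏ i, ε i ^ I i = ∏ i, ε i ^ J i :=
          NPL.prod_pow_down ε J γ hJγ
        have hωb := hbddS (insert γ T) I
        have hsplit : (∏ i, ε' i ^ J i)
            = (∏ i, (ε' i / ε i) ^ J i) * ∏ i, ε i ^ J i := by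
          rw [← Finset.prod_mul_distrib]
          exact Finset.prod_congr rfl fun i _ => by
            rw [← mul_pow, div_mul_cancel₀ _ (hε i).ne']
        have hratio : (∏ i, (ε' i / ε i) ^ J i) ≤ ρ₁ ^ (∑ i, J i) := by
          rw [← Finset.prod_pow_eq_pow_sum]
          exact Finset.prod_le_prod
            (fun i _ => pow_nonneg (div_nonneg (hε' i).le (hε i).le) _)
            (fun i _ => pow_le_pow_left₀ (div_nonneg (hε' i).le (hε i).le) (hρ₁ i) _)
        calc ‖ω I (insert γ T)‖ * ∏ i, ε' i ^ J i
            = (‖ω I (insert γ T)‖ * ∏ i, ε i ^ I i)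
                * (ε γ * ∏ i, (ε' i / ε i) ^ J i) := by
              rw [hsplit, ← hprod]; ring
          _ ≤ F * (E * ρ₁ ^ (∑ i, J i)) := by
              have hr0 : 0 ≤ ∏ i, (ε' i / ε i) ^ J i :=
                Finset.prod_nonneg fun i _ =>
                  pow_nonneg (div_nonneg (hε' i).le (hε i).le) _
              apply mul_le_mul hωb ?_ ?_ hF0
              · exact mul_le_mul (hEγ γ) hratio hr0
                  (le_trans (hε γ).le (hEγ γ))
              · exact mul_nonneg (hε γ).le hr0
          _ = E * F * ρ₁ ^ (∑ i, J i) := by ring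
      have hX : ‖∑ γ ∈ (Finset.univ \ T).filter (fun γ => J γ ≠ 0),
            NPL.sgn K T γ • ω (Function.update J γ (J γ - 1)) (insert γ T)‖
              * ∏ i, ε' i ^ J i
          ≤ n * (E * F * ρ₁ ^ (∑ i, J i)) := by
        set s := (Finset.univ \ T).filter (fun γ => J γ ≠ 0) with hs
        calc ‖∑ γ ∈ s, NPL.sgn K T γ • ω (Function.update J γ (J γ - 1)) (insert γ T)‖
              * ∏ i, ε' i ^ J i
            ≤ (∑ γ ∈ s, ‖NPL.sgn K T γ • ω (Function.update J γ (J γ - 1)) (insert γ T)‖)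
              * ∏ i, ε' i ^ J i := by
              apply mul_le_mul_of_nonneg_right (norm_sum_le _ _) (hPe' J).le
          _ = ∑ γ ∈ s, ‖NPL.sgn K T γ • ω (Function.update J γ (J γ - 1)) (insert γ T)‖
              * ∏ i, ε' i ^ J i := Finset.sum_mul _ _ _
          _ ≤ s.card • (E * F * ρ₁ ^ (∑ i, J i)) :=
              Finset.sum_le_card_nsmul s _ _ hterm
          _ = s.card * (E * F * ρ₁ ^ (∑ i, J i)) := nsmul_eq_mul _ _
          _ ≤ n * (E * F * ρ₁ ^ (∑ i, J i)) := by
              have hcard : s.card ≤ n := by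
                calc s.card ≤ (Finset.univ : Finset (Fin n)).card := Finset.card_le_univ s
                  _ = n := by simp
              exact mul_le_mul_of_nonneg_right (by exact_mod_cast hcard) hbound0
      have hs1 : ‖((m:ℕ) : K)‖⁻¹ * ρ ^ (∑ i, J i) ≤ C * (ρ ^ n)⁻¹ := by
        have h2 : ρ ^ n ≤ ρ ^ T.card :=
          pow_le_pow_of_le_one hρ0.le hρ1.le
            (by calc T.card ≤ (Finset.univ : Finset (Fin n)).card := Finset.card_le_univ T
                  _ = n := by simp)
        have h3 : ρ ^ m ≤ C * ‖((m:ℕ):K)‖ := hC m hm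
        have h4 : ρ ^ (∑ i, J i) = ρ ^ m / ρ ^ T.card := by
          rw [hmdef, pow_add]
          field_simp
        calc ‖((m:ℕ):K)‖⁻¹ * ρ ^ (∑ i, J i)
            = (ρ ^ m / ‖((m:ℕ):K)‖) / ρ ^ T.card := by rw [h4]; field_simp
          _ ≤ C / ρ ^ T.card := by
              gcongr
              exact (div_le_iff₀ hmKpos).mpr h3
          _ ≤ C / ρ ^ n := by
              gcongr
          _ = C * (ρ ^ n)⁻¹ := div_eq_mul_inv _ _
      have hρ₁σ : ρ₁ ^ (∑ i, J i) = ρ ^ (∑ i, J i) * ρ ^ (∑ i, J i) := by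
        rw [← hρρ, mul_pow]
      calc ‖NPL.hW K ω J T‖ * ∏ i, ε' i ^ J i
          = ‖((m:ℕ):K)‖⁻¹ * (‖∑ γ ∈ (Finset.univ \ T).filter (fun γ => J γ ≠ 0),
              NPL.sgn K T γ • ω (Function.update J γ (J γ - 1)) (insert γ T)‖
              * ∏ i, ε' i ^ J i) := by
            rw [NPL.hW, ← hmdef, norm_smul, norm_inv, mul_assoc]
        _ ≤ ‖((m:ℕ):K)‖⁻¹ * (n * (E * F * ρ₁ ^ (∑ i, J i))) := by
            apply mul_le_mul_of_nonneg_left hX (by positivity)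
        _ = (n * E * F * ρ ^ (∑ i, J i)) * (‖((m:ℕ):K)‖⁻¹ * ρ ^ (∑ i, J i)) := by
            rw [hρ₁σ]; ring
        _ ≤ (n * E * F * ρ ^ (∑ i, J i)) * (C * (ρ ^ n)⁻¹) := by
            apply mul_le_mul_of_nonneg_left hs1
            have hn0 : (0:ℝ) ≤ n := Nat.cast_nonneg n
            exact mul_nonneg (mul_nonneg (mul_nonneg hn0 hE0.le) hF0) (by positivity)
        _ = (M * F) * ρ ^ (∑ i, J i) := by rw [hM]; ring
  refine ⟨⟨?_, ?_⟩, ?_, ?_⟩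
  · -- concentration of h ω in degree q - 1
    intro I S hS
    have hsum0 : (∑ γ ∈ (Finset.univ \ S).filter (fun γ => I γ ≠ 0),
        NPL.sgn K S γ • ω (Function.update I γ (I γ - 1)) (insert γ S)) = 0 := by
      refine Finset.sum_eq_zero fun γ hγ => ?_
      have hγS : γ ∉ S := by
        have h5 := (Finset.mem_filter.mp hγ).1
        simp only [Finset.mem_sdiff, Finset.mem_univ, true_and] at h5
        exact h5
      have hcard : (insert γ S).card ≠ q := by
        rw [Finset.card_insert_of_notMem hγS]
        omega
      rw [hω.1 _ _ hcard, smul_zero]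
    rw [NPL.hW, hsum0, smul_zero]
  · -- decay
    intro S
    have hb : Tendsto (fun J : Fin n → ℕ => (M * formNorm ε ω) * ρ ^ (∑ i, J i))
        cofinite (nhds 0) := by
      have h1 : Tendsto (fun s : ℕ => ρ ^ s) atTop (nhds 0) :=
        tendsto_pow_atTop_nhds_zero_of_lt_one hρ0.le hρ1
      have h2 := (h1.comp (NPL.tendsto_sigma (n := n))).const_mul (M * formNorm ε ω)
      simpa [Function.comp] using h2
    exact squeeze_zero (fun J => mul_nonneg (norm_nonneg _) (hPe' J).le)
      (fun J => key J S) hb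
  · -- norm bound
    rw [formNorm]
    apply Real.iSup_le _ (mul_nonneg hM0 hF0)
    intro S
    rw [mNorm]
    apply Real.iSup_le _ (mul_nonneg hM0 hF0)
    intro J
    calc ‖NPL.hW K ω J S‖ * ∏ i, ε' i ^ J i
        ≤ (M * formNorm ε ω) * ρ ^ (∑ i, J i) := key J S
      _ ≤ (M * formNorm ε ω) * 1 := by
          apply mul_le_mul_of_nonneg_left (pow_le_one₀ hρ0.le hρ1.le)
            (mul_nonneg hM0 hF0)
      _ = M * formNorm ε ω := mul_one _
  · -- homotopy identity
    funext J S
    simp only [Pi.add_apply]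
    by_cases hzero : (∑ i, J i) + S.card = 0
    · have hJ0 : ∀ γ, J γ = 0 := by
        intro γ
        have h1 : ∑ i, J i = 0 := by omega
        exact (Finset.sum_eq_zero_iff.mp h1) γ (Finset.mem_univ γ)
      have hS : S = ∅ := Finset.card_eq_zero.mp (by omega)
      subst hS
      have h1 : dW K (NPL.hW K ω) J ∅ = 0 := by simp [dW]
      have h2 : NPL.hW K (dW K ω) J ∅ = 0 := by
        rw [NPL.hW, Finset.filter_false_of_mem, Finset.sum_empty, smul_zero]
        intro γ _
        simp [hJ0 γ]
      have h3 : ω J ∅ = 0 := hω.1 J ∅ (by simpa using hq.ne)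
      rw [h1, h2, h3, add_zero]
    · exact NPL.homotopy ω J S hzero
end

section
/- Let $K$ be a complete nonarchimedean field, and consider one variable power series. For multiradii (positive reals) $\epsilon' < \epsilon$ and characteristic $0$: the formal integration operator $\mathcal{I}: F_\epsilon(W) \to F_{\epsilon'}(W)$, $\sum_{n\geq 0} a_n x^n \mapsto \sum_{n \geq 0} \frac{a_n}{n+1} x^{n+1}$, is a well-defined bounded linear operator between the Banach spaces of convergent power series, and satisfies $\frac{d}{dx} \circ \mathcal{I} = i$, where $i: F_\epsilon(W) \to F_{\epsilon'}(W)$ is the inclusion and $\frac{d}{dx}(\sum a_n x^n) = \sum n a_n x^{n-1}$. -/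
open Filter

/-- One-variable decay condition: `‖a_n‖ ε^n → 0`, defining `F_ε(W)`. -/
def Decays1 {W : Type*} [NormedAddCommGroup W] (ε : ℝ) (a : ℕ → W) : Prop :=
  Tendsto (fun m : ℕ => ‖a m‖ * ε ^ m) atTop (nhds 0)

/-- One-variable norm `sup_n ‖a_n‖ ε^n` on `F_ε(W)`. -/
noncomputable def norm1 {W : Type*} [NormedAddCommGroup W] (ε : ℝ) (a : ℕ → W) : ℝ :=
  ⨆ m : ℕ, ‖a m‖ * ε ^ m

/-- Formal integration: `∑ a_n x^n ↦ ∑ a_n/(n+1) x^{n+1}`. -/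
noncomputable def intOp (K : Type*) [NontriviallyNormedField K]
    {W : Type*} [NormedAddCommGroup W] [NormedSpace K W] (a : ℕ → W) : ℕ → W :=
  fun m => if m = 0 then 0 else ((m : K))⁻¹ • a (m - 1)

/-- Formal differentiation: `d/dx (∑ a_n x^n) = ∑ (n+1) a_{n+1} x^n`. -/
noncomputable def derOp (K : Type*) [NontriviallyNormedField K]
    {W : Type*} [NormedAddCommGroup W] [NormedSpace K W] (a : ℕ → W) : ℕ → W :=
  fun m => (((m + 1 : ℕ) : K)) • a (m + 1)

section Aux

variable {K : Type*} [NontriviallyNormedField K] [IsUltrametricDist K] [CharZero K]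

/-- For distinct primes `p, q`, Bézout plus the ultrametric inequality forces
`max ‖p‖ ‖q‖ ≥ 1`. -/
lemma aux_prime_max (p q : ℕ) (hp : p.Prime) (hq : q.Prime) (hne : p ≠ q) :
    (1 : ℝ) ≤ max ‖(p : K)‖ ‖(q : K)‖ := by
  have hco : Nat.gcd p q = 1 := (Nat.coprime_primes hp hq).mpr hne
  have hb := Nat.gcd_eq_gcd_ab p q
  rw [hco] at hb
  have hbK : (1 : K) = (p : K) * ((Nat.gcdA p q : ℤ) : K)
      + (q : K) * ((Nat.gcdB p q : ℤ) : K) := by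
    exact_mod_cast congrArg (fun z : ℤ => (z : K)) hb
  have h1 : (1 : ℝ) = ‖(p : K) * ((Nat.gcdA p q : ℤ) : K)
      + (q : K) * ((Nat.gcdB p q : ℤ) : K)‖ := by
    rw [← hbK, norm_one]
  have h2 := IsUltrametricDist.norm_add_le_max
    ((p : K) * ((Nat.gcdA p q : ℤ) : K)) ((q : K) * ((Nat.gcdB p q : ℤ) : K))
  have hA : ‖(p : K) * ((Nat.gcdA p q : ℤ) : K)‖ ≤ ‖(p : K)‖ := by
    rw [norm_mul]
    calc ‖(p : K)‖ * ‖((Nat.gcdA p q : ℤ) : K)‖ ≤ ‖(p : K)‖ * 1 :=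
      mul_le_mul_of_nonneg_left (IsUltrametricDist.norm_intCast_le_one K _) (norm_nonneg _)
    _ = ‖(p : K)‖ := mul_one _
  have hB : ‖(q : K) * ((Nat.gcdB p q : ℤ) : K)‖ ≤ ‖(q : K)‖ := by
    rw [norm_mul]
    calc ‖(q : K)‖ * ‖((Nat.gcdB p q : ℤ) : K)‖ ≤ ‖(q : K)‖ * 1 :=
      mul_le_mul_of_nonneg_left (IsUltrametricDist.norm_intCast_le_one K _) (norm_nonneg _)
    _ = ‖(q : K)‖ := mul_one _
  calc (1 : ℝ) ≤ max ‖(p : K) * ((Nat.gcdA p q : ℤ) : K)‖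
        ‖(q : K) * ((Nat.gcdB p q : ℤ) : K)‖ := h1.le.trans h2
    _ ≤ max ‖(p : K)‖ ‖(q : K)‖ := max_le_max hA hB

/-- A natural number all of whose prime factors have norm one has norm one. -/
lemma aux_norm_nat_one (t : ℕ) (ht : t ≠ 0)
    (h : ∀ q : ℕ, q.Prime → q ∣ t → ‖(q : K)‖ = 1) : ‖(t : K)‖ = 1 := by
  induction t using Nat.strong_induction_on with
  | _ t ih =>
    rcases eq_or_lt_of_le (Nat.one_le_iff_ne_zero.mpr ht) with h1 | h1
    · rw [← h1]; simp
    · have hq : t.minFac.Prime := Nat.minFac_prime (by omega)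
      obtain ⟨s, hs⟩ := Nat.minFac_dvd t
      have hs0 : s ≠ 0 := by rintro rfl; simp at hs; omega
      have hslt : s < t := by
        have h2 := hq.two_le
        have hsp := Nat.pos_of_ne_zero hs0
        nlinarith
      have hns : ‖(s : K)‖ = 1 :=
        ih s hslt hs0 (fun r hr hrs => h r hr (hs ▸ hrs.mul_left t.minFac))
      rw [hs]
      push_cast
      rw [norm_mul, h t.minFac hq ⟨s, hs⟩, hns, one_mul]

/-- Polynomial bound on the norms of inverses of natural numbers in an
ultrametric field of characteristic zero. -/
lemma aux_exists_pow_bound :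
    ∃ k : ℕ, ∀ m : ℕ, m ≠ 0 → ‖((m : K))⁻¹‖ ≤ (m : ℝ) ^ k := by
  by_cases hex : ∃ p : ℕ, p.Prime ∧ ‖(p : K)‖ < 1
  · obtain ⟨p, hp, hplt⟩ := hex
    have hpK : ((p : K)) ≠ 0 := Nat.cast_ne_zero.mpr hp.pos.ne'
    have hp0 : (0 : ℝ) < ‖(p : K)‖ := norm_pos_iff.mpr hpK
    obtain ⟨k, hk⟩ := pow_unbounded_of_one_lt (‖(p : K)‖⁻¹) (one_lt_two (α := ℝ))
    refine ⟨k, fun m hm => ?_⟩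
    set v := m.factorization p with hv
    -- every prime other than p has norm 1
    have hother : ∀ q : ℕ, q.Prime → q ≠ p → ‖(q : K)‖ = 1 := by
      intro q hq hne
      have h1 := aux_prime_max q p hq hp hne (K := K)
      have h2 := IsUltrametricDist.norm_natCast_le_one K q
      rcases max_cases ‖(q : K)‖ ‖(p : K)‖ with ⟨he, _⟩ | ⟨he, _⟩
      · rw [he] at h1; linarith
      · rw [he] at h1; linarith
    have hcompl : ‖((ordCompl[p] m : ℕ) : K)‖ = 1 := by
      refine aux_norm_nat_one _ (Nat.ordCompl_pos p hm).ne' ?_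
      intro q hq hdvd
      refine hother q hq ?_
      rintro rfl
      exact Nat.not_dvd_ordCompl hp hm hdvd
    have hmfact : (m : K) = (p : K) ^ v * ((ordCompl[p] m : ℕ) : K) := by
      conv_lhs => rw [← Nat.ordProj_mul_ordCompl_eq_self m p]
      push_cast
      ring
    have hnorm : ‖(m : K)‖ = ‖(p : K)‖ ^ v := by
      rw [hmfact, norm_mul, norm_pow, hcompl, mul_one]
    have h2v : (2 : ℝ) ^ v ≤ (m : ℝ) := by
      have : 2 ^ v ≤ m := le_trans (Nat.pow_le_pow_left hp.two_le v) (Nat.ordProj_le p hm)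
      exact_mod_cast this
    calc ‖((m : K))⁻¹‖ = (‖(p : K)‖⁻¹) ^ v := by
          rw [norm_inv, hnorm, inv_pow]
      _ ≤ ((2 : ℝ) ^ k) ^ v := pow_le_pow_left₀ (inv_nonneg.mpr hp0.le) hk.le v
      _ = ((2 : ℝ) ^ v) ^ k := by rw [← pow_mul, ← pow_mul, Nat.mul_comm]
      _ ≤ (m : ℝ) ^ k := pow_le_pow_left₀ (by positivity) h2v k
  · push_neg at hex
    refine ⟨0, fun m hm => ?_⟩
    have : ‖(m : K)‖ = 1 := by
      refine aux_norm_nat_one m hm ?_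
      intro q hq _
      exact le_antisymm (IsUltrametricDist.norm_natCast_le_one K q) (hex q hq)
    rw [norm_inv, this, inv_one, pow_zero]

end Aux

/-- in one variable over a nonarchimedean field of characteristic
`0`, for radii `0 < ε' < ε` the formal integration operator
`𝓘 : F_ε(W) → F_{ε'}(W)` is a well-defined bounded linear operator and satisfies
`d/dx ∘ 𝓘 = i`, the inclusion `F_ε(W) → F_{ε'}(W)`. -/
theorem formal_integration_bounded {K : Type*} [NontriviallyNormedField K]
    [IsUltrametricDist K] [CharZero K] [CompleteSpace K]
    {W : Type*} [NormedAddCommGroup W] [NormedSpace K W] [CompleteSpace W]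
    (ε ε' : ℝ) (hε' : 0 < ε') (hlt : ε' < ε) :
    (∀ a : ℕ → W, Decays1 ε a → Decays1 ε' (intOp K a)) ∧
    (∃ M : ℝ, ∀ a : ℕ → W, Decays1 ε a → norm1 ε' (intOp K a) ≤ M * norm1 ε a) ∧
    (∀ a b : ℕ → W, intOp K (a + b) = intOp K a + intOp K b) ∧
    (∀ (c : K) (a : ℕ → W), intOp K (c • a) = c • intOp K a) ∧
    (∀ a : ℕ → W, derOp K (intOp K a) = a) := by
  obtain ⟨k, hk⟩ := aux_exists_pow_bound (K := K)
  have hε : 0 < ε := hε'.trans hlt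
  set q : ℝ := ε' / ε with hqdef
  have hq0 : 0 < q := div_pos hε' hε
  have hq1 : q < 1 := (div_lt_one hε).mpr hlt
  have hqε : ∀ n : ℕ, q ^ n * ε ^ n = ε' ^ n := fun n => by
    rw [← mul_pow, div_mul_cancel₀ _ hε.ne']
  -- the geometric-polynomial sequence tends to zero
  have hg0 : Tendsto (fun n : ℕ => ((n : ℝ)) ^ k * q ^ n) atTop (nhds 0) := by
    have hq : ‖q‖ < 1 := by rwa [Real.norm_eq_abs, abs_of_pos hq0]
    exact (summable_pow_mul_geometric_of_norm_lt_one k hq).tendsto_atTop_zero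
  have hg : Tendsto (fun n : ℕ => ((n : ℝ) + 1) ^ k * q ^ n) atTop (nhds 0) := by
    have h1 : Tendsto (fun n : ℕ => (((n + 1 : ℕ) : ℝ)) ^ k * q ^ (n + 1)) atTop (nhds 0) :=
      hg0.comp (tendsto_add_atTop_nat 1)
    have h2 := h1.const_mul q⁻¹
    rw [mul_zero] at h2
    refine h2.congr fun n => ?_
    push_cast
    field_simp
    ring
  -- pointwise term bound
  have term : ∀ (a : ℕ → W) (n : ℕ),
      ‖intOp K a (n + 1)‖ * ε' ^ (n + 1)
        ≤ (ε' * (((n : ℝ) + 1) ^ k * q ^ n)) * (‖a n‖ * ε ^ n) := by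
    intro a n
    have h1 : ‖intOp K a (n + 1)‖ = ‖(((n + 1 : ℕ) : K))⁻¹‖ * ‖a n‖ := by
      simp [intOp, norm_smul, norm_inv]
    have h2 : ‖(((n + 1 : ℕ) : K))⁻¹‖ ≤ ((n + 1 : ℕ) : ℝ) ^ k := hk (n + 1) n.succ_ne_zero
    calc ‖intOp K a (n + 1)‖ * ε' ^ (n + 1)
        = ‖(((n + 1 : ℕ) : K))⁻¹‖ * (‖a n‖ * ε' ^ (n + 1)) := by rw [h1]; ring
      _ ≤ ((n + 1 : ℕ) : ℝ) ^ k * (‖a n‖ * ε' ^ (n + 1)) :=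
          mul_le_mul_of_nonneg_right h2 (by positivity)
      _ = (ε' * (((n : ℝ) + 1) ^ k * q ^ n)) * (‖a n‖ * ε ^ n) := by
          rw [pow_succ]
          rw [← hqε n]
          push_cast
          ring
  refine ⟨?_, ?_, ?_, ?_, ?_⟩
  · -- well-definedness
    intro a ha
    rw [Decays1] at ha ⊢
    rw [← tendsto_add_atTop_iff_nat 1]
    refine squeeze_zero (fun n => by positivity) (fun n => term a n) ?_
    have := (hg.const_mul ε').mul ha
    simpa using this
  · -- boundedness
    obtain ⟨S, hS⟩ := hg.bddAbove_range
    have hS' : ∀ n : ℕ, ((n : ℝ) + 1) ^ k * q ^ n ≤ S := fun n =>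
      hS (Set.mem_range_self n)
    have hS0 : 0 ≤ S := le_trans (by positivity) (hS' 0)
    refine ⟨ε' * S, fun a ha => ?_⟩
    have hbdd : BddAbove (Set.range fun n : ℕ => ‖a n‖ * ε ^ n) := ha.bddAbove_range
    have hnn : 0 ≤ norm1 ε a := Real.iSup_nonneg fun m => by positivity
    have hle : ∀ n : ℕ, ‖a n‖ * ε ^ n ≤ norm1 ε a := fun n =>
      le_ciSup hbdd n
    refine Real.iSup_le (fun m => ?_) (by positivity)
    match m with
    | 0 => simp [intOp]; positivity
    | n + 1 =>
      calc ‖intOp K a (n + 1)‖ * ε' ^ (n + 1)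
          ≤ (ε' * (((n : ℝ) + 1) ^ k * q ^ n)) * (‖a n‖ * ε ^ n) := term a n
        _ ≤ (ε' * S) * norm1 ε a := by
            apply mul_le_mul
            · exact mul_le_mul_of_nonneg_left (hS' n) hε'.le
            · exact hle n
            · positivity
            · positivity
  · -- additivity
    intro a b
    funext m
    match m with
    | 0 => simp [intOp]
    | n + 1 => simp [intOp, smul_add]
  · -- homogeneity
    intro c a
    funext m
    match m with
    | 0 => simp [intOp]
    | n + 1 =>
      simp only [intOp, Nat.succ_ne_zero, if_false, Nat.add_sub_cancel, Pi.smul_apply]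
      rw [smul_comm]
  · -- right inverse of differentiation
    intro a
    funext m
    have hne : (((m + 1 : ℕ) : K)) ≠ 0 := Nat.cast_ne_zero.mpr (Nat.succ_ne_zero m)
    simp only [derOp, intOp, Nat.succ_ne_zero, if_false, Nat.add_sub_cancel]
    rw [smul_smul, mul_inv_cancel₀ hne, one_smul]
end
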